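/- In ℤ[A, A⁻¹], one has (−A)⁻³ · (A·(−A² − A⁻²) + A⁻¹) = 1. Hence the normalised arrow polynomial is invariant under the first Reidemeister move with a positive kink. -/
import Mathlib


open LaurentPolynomial

/-- Invariance of the normalised arrow polynomial under R1 with a positive kink. -/
theorem arrow_R1_positive (u : (LaurentPolynomial ℤ)ˣ)
    (hu : (u : LaurentPolynomial ℤ) = -T 1) :
    ((u ^ (-3 : ℤ) : (LaurentPolynomial ℤ)ˣ) : LaurentPolynomial ℤ) *
      (T 1 * (-T 2 - T (-2)) + T (-1)) = 1 := by
  have hexpr : T 1 * (-T 2 - T (-2)) + T (-1) = -(T 3 : LaurentPolynomial ℤ) := by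
    have h1 : (T 1 : LaurentPolynomial ℤ) * T 2 = T 3 := by rw [← T_add]; norm_num
    have h2 : (T 1 : LaurentPolynomial ℤ) * T (-2) = T (-1) := by rw [← T_add]; norm_num
    rw [mul_sub, mul_neg, h1, h2]; ring
  have hcube : ((u ^ (3 : ℤ) : (LaurentPolynomial ℤ)ˣ) : LaurentPolynomial ℤ)
      = -(T 3 : LaurentPolynomial ℤ) := by
    rw [zpow_ofNat, Units.val_pow_eq_pow_val, hu]
    have : (T 1 : LaurentPolynomial ℤ) ^ 3 = T 3 := by
      rw [pow_succ, pow_succ, pow_one, ← T_add, ← T_add]; norm_num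
    rw [neg_pow, this]; ring
  calc ((u ^ (-3 : ℤ) : (LaurentPolynomial ℤ)ˣ) : LaurentPolynomial ℤ) *
      (T 1 * (-T 2 - T (-2)) + T (-1))
      = ((u ^ (-3 : ℤ) : (LaurentPolynomial ℤ)ˣ) : LaurentPolynomial ℤ) *
        ((u ^ (3 : ℤ) : (LaurentPolynomial ℤ)ˣ) : LaurentPolynomial ℤ) := by
          rw [hexpr, hcube]
    _ = ((u ^ (-3 : ℤ) * u ^ (3 : ℤ) : (LaurentPolynomial ℤ)ˣ) : LaurentPolynomial ℤ) := by
          rw [Units.val_mul]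
    _ = 1 := by rw [← zpow_add u]; norm_num
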